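/- arXiv:2003.10475 — 8 statements merged into one kernel-verified Lean document; each statement's English description precedes it below -/
import Mathlib

section
/- For all positive integers N1, N2 and K, the K×K Toeplitz determinant of binomial coefficients satisfies det[ C(N1+N2, N2 + j - k) ]_{j,k=1}^K = [ G(N1+1) · G(N2+1) · G(N1+N2+K+1) · G(K+1) ] / [ G(N1+N2+1) · G(N1+K+1) · G(N2+K+1) ], where C(n,r) denotes the binomial coefficient (equal to 0 when r < 0 or r > n). -/
/-- Barnes G-function at positive integer arguments: `G(n) = ∏_{j=0}^{n-2} j!`. -/
def barnesG (n : ℕ) : ℕ := ∏ j ∈ Finset.range (n - 1), Nat.factorial j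

/-- Binomial coefficient `C(n, r)` with integer lower entry, equal to `0` when `r < 0`
(and, via `Nat.choose`, when `r > n`). -/
def chooseZ (n : ℕ) (r : ℤ) : ℕ := if 0 ≤ r then n.choose r.toNat else 0

open Finset Nat Matrix Polynomial

/-!
Multiplying the Toeplitz matrix `C(a, b + j - k)` on the left by the lower-triangular Pascal
matrix `C(j, i)` and on the right by its transpose (both of determinant one) turns it, by two
Vandermonde convolutions, into the matrix `C(a + j + k, b + j)`. With `a = m + n`, `b = n`,
pulling `(m + n + j)! / (n + j)!` out of row `j` and `1 / (m + k)!` out of column `k` leaves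
the rising factorials `(x + j)^(k)`: column `k` is a monic polynomial of degree `k` evaluated at
the nodes `x + j`, so the determinant is the Vandermonde determinant
`∏_{i < j} (j - i) = ∏_{j < K} j!`. The product of factorials so obtained telescopes into the
stated ratio of Barnes G-values.
-/

lemma chooseZ_natCast (n s : ℕ) : chooseZ n s = n.choose s := by
  simp [chooseZ]

lemma chooseZ_of_neg {n : ℕ} {r : ℤ} (hr : r < 0) : chooseZ n r = 0 := by
  simp [chooseZ, hr.not_ge]

lemma chooseZ_natCast_sub {n s i : ℕ} (hi : i ≤ s) :
    chooseZ n ((s : ℤ) - i) = n.choose (s - i) := by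
  rw [← Nat.cast_sub hi, chooseZ_natCast]

lemma sum_range_choose_mul_chooseZ_sub {a L : ℕ} (hL : a < L) (b : ℕ) (q : ℤ) :
    ∑ i ∈ range L, a.choose i * chooseZ b (q - i) = chooseZ (a + b) q := by
  rcases lt_or_ge q 0 with hq | hq
  · rw [chooseZ_of_neg hq]
    exact sum_eq_zero fun i _ => by rw [chooseZ_of_neg (by omega), mul_zero]
  lift q to ℕ using hq with Q
  -- both sums run over the indices `i < min L (Q + 1)`, the others contributing zero
  have hmin : range (min L (Q + 1)) ⊆ range L := range_subset_range.mpr (min_le_left _ _)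
  have hmin' : range (min L (Q + 1)) ⊆ range (Q + 1) := range_subset_range.mpr (min_le_right _ _)
  rw [chooseZ_natCast, add_choose_eq, Nat.sum_antidiagonal_eq_sum_range_succ_mk,
    ← sum_subset hmin, ← sum_subset hmin']
  · refine sum_congr rfl fun i hi => ?_
    rw [chooseZ_natCast_sub (by rw [mem_range, lt_min_iff] at hi; omega)]
  · intro i hi hi'
    simp only [mem_range, lt_min_iff, not_and_or, not_lt] at hi hi'
    rw [Nat.choose_eq_zero_of_lt (by omega), zero_mul]
  · intro i hi hi'
    simp only [mem_range, lt_min_iff, not_and_or, not_lt] at hi hi'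
    rw [chooseZ_of_neg (by omega), mul_zero]

lemma sum_range_choose_mul_choose_add {a L : ℕ} (hL : a < L) (b m : ℕ) :
    ∑ i ∈ range L, a.choose i * b.choose (m + i) = (a + b).choose (m + a) := by
  have hsub : range (a + 1) ⊆ range L := range_subset_range.mpr hL
  rw [← sum_subset hsub, ← sum_range_reflect, ← chooseZ_natCast,
    ← sum_range_choose_mul_chooseZ_sub (lt_add_one a)]
  · refine sum_congr rfl fun i hi => ?_
    have hia : i ≤ a := Nat.lt_succ_iff.mp (mem_range.mp hi)
    rw [add_tsub_cancel_right, Nat.choose_symm hia, chooseZ_natCast_sub (by omega)]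
    congr 2
    omega
  · intro i _ hi
    rw [Nat.choose_eq_zero_of_lt (by rw [mem_range] at hi; omega), zero_mul]

def pascalMatrix (R : Type*) [Semiring R] (K : ℕ) : Matrix (Fin K) (Fin K) R :=
  of fun i j => ((i : ℕ).choose j : R)

section CommRing

variable {R : Type*} [CommRing R]

lemma det_pascalMatrix (K : ℕ) : (pascalMatrix R K).det = 1 := by
  rw [det_of_isLowerTriangular]
  · simp [pascalMatrix]
  · intro i j hij
    simp [pascalMatrix, Nat.choose_eq_zero_of_lt (show (i : ℕ) < j from hij)]

lemma pascalMatrix_mul_toeplitz_chooseZ_mul_transpose (a b K : ℕ) :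
    pascalMatrix R K * (of fun j k : Fin K => (chooseZ a ((b : ℤ) + (j : ℤ) - (k : ℤ)) : R)) *
        (pascalMatrix R K)ᵀ = of fun j k : Fin K => ((a + j + k).choose (b + j) : R) := by
  have hright (j k : Fin K) :
      ((of fun j k : Fin K => (chooseZ a ((b : ℤ) + (j : ℤ) - (k : ℤ)) : R)) *
        (pascalMatrix R K)ᵀ) j k = ((k + a : ℕ).choose (b + j) : R) := by
    have := sum_range_choose_mul_chooseZ_sub k.isLt a ((b + j : ℕ) : ℤ)
    rw [chooseZ_natCast, ← Fin.sum_univ_eq_sum_range] at this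
    simp only [mul_apply, of_apply, transpose_apply, pascalMatrix, ← this]
    push_cast
    exact sum_congr rfl fun i _ => by rw [mul_comm]
  ext j k
  rw [mul_assoc, mul_apply]
  simp only [hright]
  simp only [pascalMatrix, of_apply]
  have := sum_range_choose_mul_choose_add j.isLt (k + a) b
  rw [← Fin.sum_univ_eq_sum_range, show (j : ℕ) + (k + a) = a + j + k by ring] at this
  norm_cast
  exact congrArg Nat.cast this

lemma det_toeplitz_chooseZ (a b K : ℕ) :
    (of fun j k : Fin K => (chooseZ a ((b : ℤ) + (j : ℤ) - (k : ℤ)) : R)).det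
      = (of fun j k : Fin K => ((a + j + k).choose (b + j) : R)).det := by
  rw [← pascalMatrix_mul_toeplitz_chooseZ_mul_transpose, det_mul, det_mul, det_transpose,
    det_pascalMatrix, one_mul, mul_one]

lemma det_vandermonde_natCast (K : ℕ) :
    (vandermonde fun i : Fin K => (i : R)).det = ∏ j ∈ range K, (j ! : R) := by
  cases K with
  | zero => simp
  | succ K =>
    rw [det_vandermonde_id_eq_superFactorial, ← prod_range_succ_factorial, Nat.cast_prod]

lemma det_ascPochhammer_eval_add [IsDomain R] (K : ℕ) (x : R) :
    (of fun j k : Fin K => (ascPochhammer R k).eval (x + j)).det = ∏ j ∈ range K, (j ! : R) := by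
  rw [← det_eval_matrixOfPolynomials_eq_det_vandermonde (fun j : Fin K => x + j)
    (fun k => ascPochhammer R k) (fun k => ascPochhammer_natDegree R k)
    (fun k => monic_ascPochhammer R k)]
  simp_rw [add_comm x]
  rw [det_vandermonde_add, det_vandermonde_natCast]

end CommRing

section Field

variable {R : Type*} [Field R] [CharZero R]

lemma cast_choose_add_add (a b c : ℕ) :
    ((a + b + c).choose b : R) =
      (a + b)! * (ascPochhammer R c).eval (((a + b : ℕ) : R) + 1) / (b ! * (a + c)!) := by
  rw [factorial_mul_ascPochhammer, Nat.cast_choose R (by omega),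
    show a + b + c - b = a + c by omega]

lemma det_choose_add_add (m n K : ℕ) :
    (of fun j k : Fin K => ((m + n + j + k).choose (n + j) : R)).det =
      ∏ j ∈ range K, ((m + n + j)! * j ! / ((n + j)! * (m + j)!) : R) := by
  have hfactor : (of fun j k : Fin K => ((m + n + j + k).choose (n + j) : R)) =
      diagonal (fun j : Fin K => ((m + n + j)! / (n + j)! : R)) *
        (of fun j k : Fin K => (ascPochhammer R k).eval (((m + n : ℕ) : R) + 1 + j)) *
        diagonal (fun k : Fin K => ((m + k)! : R)⁻¹) := by
    ext j k
    simp only [mul_diagonal, diagonal_mul, of_apply]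
    rw [show m + n + j + k = m + (n + j) + k by ring, cast_choose_add_add, ← add_assoc]
    push_cast
    rw [add_right_comm _ (1 : R)]
    ring
  rw [hfactor, det_mul, det_mul, det_diagonal, det_diagonal, det_ascPochhammer_eval_add,
    Fin.prod_univ_eq_prod_range (fun j => ((m + n + j)! / (n + j)! : R)),
    Fin.prod_univ_eq_prod_range (fun j => ((m + j)! : R)⁻¹), ← prod_mul_distrib,
    ← prod_mul_distrib]
  refine prod_congr rfl fun j _ => ?_
  field_simp

end Field

lemma barnesG_succ (n : ℕ) : barnesG (n + 1) = ∏ j ∈ range n, j ! := rfl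

lemma barnesG_pos (n : ℕ) : 0 < barnesG n := prod_pos fun j _ => factorial_pos j

lemma barnesG_add_add_one (t K : ℕ) :
    barnesG (t + K + 1) = barnesG (t + 1) * ∏ j ∈ range K, (t + j)! := by
  rw [barnesG_succ, barnesG_succ, prod_range_add]

theorem toeplitz_binomial_det_general (N1 N2 K : ℕ) :
    Matrix.det (Matrix.of fun j k : Fin K =>
        (chooseZ (N1 + N2) ((N2 : ℤ) + (j : ℤ) - (k : ℤ)) : ℚ))
      = (barnesG (N1 + 1) * barnesG (N2 + 1) * barnesG (N1 + N2 + K + 1) * barnesG (K + 1) : ℚ)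
        / (barnesG (N1 + N2 + 1) * barnesG (N1 + K + 1) * barnesG (N2 + K + 1)) := by
  have hG (n : ℕ) : (barnesG n : ℚ) ≠ 0 := by exact_mod_cast (barnesG_pos n).ne'
  rw [det_toeplitz_chooseZ, det_choose_add_add]
  simp only [barnesG_add_add_one, barnesG_succ K, prod_div_distrib, prod_mul_distrib,
    Nat.cast_mul, Nat.cast_prod]
  field_simp [hG (N1 + 1), hG (N2 + 1), hG (N1 + N2 + 1)]

/-- Böttcher–Silbermann evaluation of the Toeplitz determinant of binomial coefficients:
`det[ C(N1+N2, N2 + j - k) ]_{j,k=1}^K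
  = G(N1+1) G(N2+1) G(N1+N2+K+1) G(K+1) / ( G(N1+N2+1) G(N1+K+1) G(N2+K+1) )`. -/
theorem toeplitz_binomial_det (N1 N2 K : ℕ) (hN1 : 0 < N1) (hN2 : 0 < N2) (hK : 0 < K) :
    Matrix.det (Matrix.of fun j k : Fin K =>
        (chooseZ (N1 + N2) ((N2 : ℤ) + (j : ℤ) - (k : ℤ)) : ℚ))
      = (barnesG (N1 + 1) * barnesG (N2 + 1) * barnesG (N1 + N2 + K + 1) * barnesG (K + 1) : ℚ)
        / (barnesG (N1 + N2 + 1) * barnesG (N1 + K + 1) * barnesG (N2 + K + 1)) :=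
  toeplitz_binomial_det_general N1 N2 K
end

section
/- Let K be a positive integer and let σ : ℝ → ℂ be a 2π-periodic integrable function satisfying σ(θ) = σ(-θ), with Fourier coefficients σ_j = (1/2π) ∫_{-π}^{π} σ(θ) e^{-i j θ} dθ. Write f for the function on [-1,1] defined by f(cos θ) = σ(θ), and for a weight w on (-1,1) let D_K(w) = det( ∫_{-1}^{1} x^{j+k-2} w(x) dx )_{j,k=1}^{K}. Then: (i) (1/2) det( σ_{j-k} + σ_{j+k-2} )_{j,k=1}^{K} = (2^{K²-K+1} / (2π)^K) · D_K( f(x) / √(1-x²) ); and (ii) det( σ_{j-k} - σ_{j+k} )_{j,k=1}^{K} = (2^{K²+K} / (2π)^K) · D_K( f(x) · √(1-x²) ). -/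
/-!
Since `σ` is even, its Fourier coefficients are cosine integrals over `[0, π]`, and the
product-to-sum formulas turn `σ_{j-k} + σ_{j+k}` and `σ_{j-k} - σ_{j+k+2}` into `2/π` times
`∫ σ cos jθ cos kθ = ∫ σ T_j(cos θ) T_k(cos θ)` and
`∫ σ sin (j+1)θ sin (k+1)θ = ∫ σ sin² θ U_j(cos θ) U_k(cos θ)`. Expanding the Chebyshev
polynomials in monomials factors each matrix as `A H Aᵀ`: `A` is lower triangular with the
leading coefficients `2^(j-1)`, resp. `2^j`, on its diagonal, and `H` is the Hankel matrix of
the moments `∫ σ cos^(j+k) θ`, resp. `∫ σ sin² θ cos^(j+k) θ`. The substitution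
`x = cos θ` turns these into the moments of `f(x) / √(1-x²)`, resp. `f(x) √(1-x²)`,
on `[-1, 1]`.
-/

open MeasureTheory

/-- Fourier coefficients `σ_j = (1/2π) ∫_{-π}^{π} σ(θ) e^{-ijθ} dθ` of a symbol. -/
noncomputable def fourierCoeffZ (σ : ℝ → ℂ) (n : ℤ) : ℂ :=
  (1 / (2 * (Real.pi : ℂ))) * ∫ θ in (-Real.pi)..Real.pi,
    σ θ * Complex.exp (-Complex.I * (n : ℂ) * (θ : ℂ))

/-- Hankel determinant of moments of a weight `w` on `(-1, 1)`:
`D_K(w) = det( ∫_{-1}^1 x^{j+k-2} w(x) dx )_{j,k=1}^K`. -/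
noncomputable def hankelDet (K : ℕ) (w : ℝ → ℂ) : ℂ :=
  Matrix.det (Matrix.of fun j k : Fin K =>
    ∫ x in (-1 : ℝ)..1, (x : ℂ) ^ ((j : ℕ) + (k : ℕ)) * w x)

open Polynomial Matrix Real intervalIntegral

section Gram

variable {R : Type*} [CommRing R] {K : ℕ}

theorem Polynomial.eq_sum_fin_C_mul_X_pow {p : R[X]} (hp : p.natDegree < K) :
    p = ∑ m : Fin K, C (p.coeff m) * X ^ (m : ℕ) := by
  rw [Fin.sum_univ_eq_sum_range (fun m => C (p.coeff m) * X ^ m)]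
  exact p.as_sum_range_C_mul_X_pow' hp

theorem LinearMap.apply_mul_eq_sum_coeff (L : R[X] →ₗ[R] R) {p q : R[X]}
    (hp : p.natDegree < K) (hq : q.natDegree < K) :
    L (p * q) = ∑ m : Fin K, ∑ n : Fin K, p.coeff m * L (X ^ ((m : ℕ) + n)) * q.coeff n := by
  conv_lhs => rw [eq_sum_fin_C_mul_X_pow hp, eq_sum_fin_C_mul_X_pow hq, Finset.sum_mul_sum]
  simp only [map_sum]
  refine Finset.sum_congr rfl fun m _ => Finset.sum_congr rfl fun n _ => ?_
  rw [show C (p.coeff m) * X ^ (m : ℕ) * (C (q.coeff n) * X ^ (n : ℕ))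
      = (p.coeff m * q.coeff n) • X ^ ((m : ℕ) + n) by rw [smul_eq_C_mul, C_mul, pow_add]; ring,
    map_smul, smul_eq_mul]
  ring

theorem det_gram_eq_prod_coeff_sq_mul_det_hankel (L : R[X] →ₗ[R] R) (p : Fin K → R[X])
    (hp : ∀ j, (p j).natDegree ≤ j) :
    det (of fun j k => L (p j * p k))
      = (∏ j, (p j).coeff j) ^ 2 * det (of fun j k : Fin K => L (X ^ ((j : ℕ) + k))) := by
  set A : Matrix (Fin K) (Fin K) R := of fun j m => (p j).coeff m
  have hlt : ∀ j, (p j).natDegree < K := fun j => (hp j).trans_lt j.isLt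
  have hfactor : of (fun j k => L (p j * p k))
      = A * of (fun j k : Fin K => L (X ^ ((j : ℕ) + k))) * Aᵀ := by
    ext j k
    simp only [of_apply, L.apply_mul_eq_sum_coeff (hlt j) (hlt k), mul_apply, transpose_apply,
      Finset.sum_mul, A]
    exact Finset.sum_comm
  have hA : A.IsLowerTriangular := fun j m hjm =>
    coeff_eq_zero_of_natDegree_lt ((hp j).trans_lt hjm)
  rw [hfactor, det_mul, det_mul, det_transpose, det_of_isLowerTriangular A hA]
  simp only [A, of_apply]
  ring

end Gram

open Polynomial.Chebyshev

theorem Polynomial.Chebyshev.coeff_T_natCast_self {R : Type*} [CommRing R] [IsDomain R]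
    [NeZero (2 : R)] (n : ℕ) : (T R n).coeff n = 2 ^ (n - 1) := by
  simpa using (T R n).coeff_natDegree

theorem Polynomial.Chebyshev.coeff_U_natCast_self {R : Type*} [CommRing R] [IsDomain R]
    [NeZero (2 : R)] (n : ℕ) : (U R n).coeff n = 2 ^ n := by
  simpa using (U R n).coeff_natDegree

theorem Fin.prod_pow_sq_mul_pow {M : Type*} [CommMonoid M] (a : M) (m : ℕ) :
    (∏ i : Fin m, a ^ (i : ℕ)) ^ 2 * a ^ m = a ^ (m ^ 2) := by
  rw [Finset.prod_pow_eq_pow_sum, Fin.sum_univ_eq_sum_range (fun i => i), ← pow_mul, ← pow_add,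
    Finset.sum_range_id_mul_two]
  cases m with
  | zero => rfl
  | succ m => congr 1; simp only [add_tsub_cancel_right]; ring

noncomputable def cosMomentFunctional (g : ℝ → ℂ) {a b : ℝ}
    (hg : IntervalIntegrable g volume a b) : ℂ[X] →ₗ[ℂ] ℂ where
  toFun p := ∫ θ in a..b, g θ * p.eval (cos θ : ℂ)
  map_add' p q := by
    simp only [eval_add, mul_add]
    exact integral_add (hg.mul_continuousOn (by fun_prop)) (hg.mul_continuousOn (by fun_prop))
  map_smul' c p := by
    simp only [eval_smul, smul_eq_mul, RingHom.id_apply, ← intervalIntegral.integral_const_mul]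
    exact integral_congr fun θ _ => by ring

theorem cosMomentFunctional_apply (g : ℝ → ℂ) {a b : ℝ}
    (hg : IntervalIntegrable g volume a b) (p : ℂ[X]) :
    cosMomentFunctional g hg p = ∫ θ in a..b, g θ * p.eval (cos θ : ℂ) := rfl

theorem integral_neg_one_one_eq_integral_sin_smul_comp_cos {E : Type*} [NormedAddCommGroup E]
    [NormedSpace ℝ E] (g : ℝ → E) :
    ∫ x in -1..1, g x = ∫ θ in 0..π, sin θ • g (cos θ) := by
  rw [integral_of_le (by norm_num), integral_of_le pi_pos.le, ← integral_Icc_eq_integral_Ioc,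
    ← integral_Icc_eq_integral_Ioc, ← bijOn_cos.image_eq,
    integral_image_eq_integral_abs_deriv_smul measurableSet_Icc
      (fun θ _ => (hasDerivAt_cos θ).hasDerivWithinAt) injOn_cos g]
  refine setIntegral_congr_fun measurableSet_Icc fun θ hθ => ?_
  rw [abs_neg, abs_of_nonneg (sin_nonneg_of_nonneg_of_le_pi hθ.1 hθ.2)]

theorem integral_eval_mul_eq_cosMomentFunctional {w g : ℝ → ℂ}
    (hg : IntervalIntegrable g volume 0 π)
    (hw : ∀ θ ∈ Set.Ioo 0 π, sin θ * w (cos θ) = g θ)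
    (p : ℂ[X]) : ∫ x in -1..1, p.eval (x : ℂ) * w x = cosMomentFunctional g hg p := by
  rw [integral_neg_one_one_eq_integral_sin_smul_comp_cos, cosMomentFunctional_apply,
    integral_of_le pi_pos.le, integral_of_le pi_pos.le, integral_Ioc_eq_integral_Ioo,
    integral_Ioc_eq_integral_Ioo]
  refine setIntegral_congr_fun measurableSet_Ioo fun θ hθ => ?_
  rw [Complex.real_smul, ← hw θ hθ]
  push_cast
  ring

theorem hankelDet_eq_det_cosMomentFunctional {w g : ℝ → ℂ}
    (hg : IntervalIntegrable g volume 0 π)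
    (hw : ∀ θ ∈ Set.Ioo 0 π, sin θ * w (cos θ) = g θ)
    (K : ℕ) :
    hankelDet K w = det (of fun j k : Fin K => cosMomentFunctional g hg (X ^ ((j : ℕ) + k))) := by
  simp only [hankelDet, ← integral_eval_mul_eq_cosMomentFunctional hg hw, eval_pow, eval_X]

section Even

variable {σ : ℝ → ℂ}

theorem zero_mem_uIcc_neg_pi_pi : (0 : ℝ) ∈ Set.uIcc (-π) π :=
  Set.mem_uIcc.2 (Or.inl ⟨by linarith [pi_pos], pi_pos.le⟩)

theorem fourierCoeffZ_eq_integral_cos (hint : IntervalIntegrable σ volume (-π) π)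
    (hsym : ∀ θ, σ (-θ) = σ θ) (n : ℤ) :
    fourierCoeffZ σ n = (1 / π) * ∫ θ in 0..π, σ θ * cos (n * θ) := by
  have hleft := hint.mono_set (Set.uIcc_subset_uIcc_left zero_mem_uIcc_neg_pi_pi)
  have hright := hint.mono_set (Set.uIcc_subset_uIcc_right zero_mem_uIcc_neg_pi_pi)
  have hexp : ∀ {a b : ℝ} (s : ℂ), IntervalIntegrable σ volume a b →
      IntervalIntegrable (fun θ : ℝ => σ θ * Complex.exp (s * θ)) volume a b :=
    fun _ h => h.mul_continuousOn (by fun_prop)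
  have hreflect : ∫ θ in -π..0, σ θ * Complex.exp (-Complex.I * n * θ)
      = ∫ θ in 0..π, σ θ * Complex.exp (Complex.I * n * θ) := by
    rw [← neg_zero, ← integral_comp_neg]
    simp only [hsym, neg_zero, Complex.ofReal_neg, mul_neg, neg_mul, neg_neg]
  have hcos : ∀ θ : ℝ, Complex.exp (Complex.I * n * θ) + Complex.exp (-Complex.I * n * θ)
      = cos (n * θ) * 2 := fun θ => by
    push_cast
    rw [mul_comm _ (2 : ℂ), Complex.two_cos]
    ring_nf
  rw [fourierCoeffZ, ← integral_add_adjacent_intervals (hexp _ hleft) (hexp _ hright), hreflect,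
    ← integral_add (hexp _ hright) (hexp _ hright)]
  simp only [← mul_add, hcos, ← mul_assoc, intervalIntegral.integral_mul_const]
  field_simp

theorem fourierCoeffZ_sub_add_fourierCoeffZ_add (hint : IntervalIntegrable σ volume (-π) π)
    (hsym : ∀ θ, σ (-θ) = σ θ) (hσ : IntervalIntegrable σ volume 0 π) (j k : ℤ) :
    fourierCoeffZ σ (j - k) + fourierCoeffZ σ (j + k)
      = (2 / π) * cosMomentFunctional σ hσ (T ℂ j * T ℂ k) := by
  have hpt : ∀ θ : ℝ, σ θ * cos ((j - k : ℤ) * θ) + σ θ * cos ((j + k : ℤ) * θ)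
      = 2 * (σ θ * (T ℂ j * T ℂ k).eval (cos θ : ℂ)) := fun θ => by
    simp only [eval_mul, Complex.ofReal_cos, T_complex_cos]
    push_cast
    rw [sub_mul, add_mul, Complex.cos_sub, Complex.cos_add]
    ring
  rw [fourierCoeffZ_eq_integral_cos hint hsym, fourierCoeffZ_eq_integral_cos hint hsym, ← mul_add,
    ← integral_add (hσ.mul_continuousOn (by fun_prop)) (hσ.mul_continuousOn (by fun_prop)),
    integral_congr fun θ _ => hpt θ, intervalIntegral.integral_const_mul,
    cosMomentFunctional_apply]
  ring

theorem fourierCoeffZ_sub_sub_fourierCoeffZ_add_two (hint : IntervalIntegrable σ volume (-π) π)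
    (hsym : ∀ θ, σ (-θ) = σ θ)
    (hσ : IntervalIntegrable (fun θ => σ θ * sin θ ^ 2) volume 0 π)
    (j k : ℤ) :
    fourierCoeffZ σ (j - k) - fourierCoeffZ σ (j + k + 2)
      = (2 / π) * cosMomentFunctional (fun θ => σ θ * sin θ ^ 2) hσ (U ℂ j * U ℂ k) := by
  have hpt : ∀ θ : ℝ, σ θ * cos ((j - k : ℤ) * θ) - σ θ * cos ((j + k + 2 : ℤ) * θ)
      = 2 * (σ θ * sin θ ^ 2 * (U ℂ j * U ℂ k).eval (cos θ : ℂ)) := fun θ => by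
    simp only [eval_mul, Complex.ofReal_cos, Complex.ofReal_sin]
    push_cast
    rw [show ((j:ℂ) - k) * θ = (j + 1) * θ - (k + 1) * θ by ring,
      show ((j:ℂ) + k + 2) * θ = (j + 1) * θ + (k + 1) * θ by ring, Complex.cos_sub,
      Complex.cos_add, ← U_complex_cos θ j, ← U_complex_cos θ k]
    ring
  have hσ' := hint.mono_set (Set.uIcc_subset_uIcc_right zero_mem_uIcc_neg_pi_pi)
  rw [fourierCoeffZ_eq_integral_cos hint hsym, fourierCoeffZ_eq_integral_cos hint hsym, ← mul_sub,
    ← integral_sub (hσ'.mul_continuousOn (by fun_prop)) (hσ'.mul_continuousOn (by fun_prop)),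
    integral_congr fun θ _ => hpt θ, intervalIntegral.integral_const_mul,
    cosMomentFunctional_apply]
  ring

theorem det_fourierCoeffZ_add_eq_hankelDet (hint : IntervalIntegrable σ volume (-π) π)
    (hsym : ∀ θ, σ (-θ) = σ θ) {w : ℝ → ℂ}
    (hw : ∀ θ ∈ Set.Ioo 0 π, sin θ * w (cos θ) = σ θ) (n : ℕ) :
    (1 / 2) * det (of fun j k : Fin (n + 1) =>
        fourierCoeffZ σ ((j : ℤ) - (k : ℤ)) + fourierCoeffZ σ ((j : ℤ) + (k : ℤ)))
      = 2 ^ (n ^ 2 + n + 1) / (2 * π) ^ (n + 1) * hankelDet (n + 1) w := by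
  have hσ := hint.mono_set (Set.uIcc_subset_uIcc_right zero_mem_uIcc_neg_pi_pi)
  have hM : (of fun j k : Fin (n + 1) =>
        fourierCoeffZ σ ((j : ℤ) - (k : ℤ)) + fourierCoeffZ σ ((j : ℤ) + (k : ℤ)))
      = (2 / π : ℂ) • of fun j k : Fin (n + 1) =>
        cosMomentFunctional σ hσ (T ℂ j * T ℂ k) :=
    ext fun j k => fourierCoeffZ_sub_add_fourierCoeffZ_add hint hsym hσ j k
  have hπ : (π : ℂ) ≠ 0 := by exact_mod_cast pi_ne_zero
  rw [hM, det_smul, det_gram_eq_prod_coeff_sq_mul_det_hankel _ (fun j => T ℂ (j : ℕ))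
    (fun j => by simp), hankelDet_eq_det_cosMomentFunctional hσ hw, Fintype.card_fin,
    Fin.prod_univ_succ]
  simp only [coeff_T_natCast_self, Fin.val_zero, Fin.val_succ, add_tsub_cancel_right, zero_tsub,
    pow_zero, one_mul]
  rw [show (2 : ℂ) ^ (n ^ 2 + n + 1) = 2 ^ n ^ 2 * 2 ^ n * 2 by ring,
    ← Fin.prod_pow_sq_mul_pow (2 : ℂ) n, div_pow, mul_pow]
  field_simp
  ring

theorem det_fourierCoeffZ_sub_eq_hankelDet (hint : IntervalIntegrable σ volume (-π) π)
    (hsym : ∀ θ, σ (-θ) = σ θ) {w : ℝ → ℂ}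
    (hw : ∀ θ ∈ Set.Ioo 0 π, sin θ * w (cos θ) = σ θ * sin θ ^ 2) (K : ℕ) :
    det (of fun j k : Fin K =>
        fourierCoeffZ σ ((j : ℤ) - (k : ℤ)) - fourierCoeffZ σ ((j : ℤ) + (k : ℤ) + 2))
      = 2 ^ (K ^ 2 + K) / (2 * π) ^ K * hankelDet K w := by
  have hσ : IntervalIntegrable (fun θ => σ θ * sin θ ^ 2) volume 0 π :=
    (hint.mono_set (Set.uIcc_subset_uIcc_right zero_mem_uIcc_neg_pi_pi)).mul_continuousOn
      (by fun_prop)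
  have hM : (of fun j k : Fin K =>
        fourierCoeffZ σ ((j : ℤ) - (k : ℤ)) - fourierCoeffZ σ ((j : ℤ) + (k : ℤ) + 2))
      = (2 / π : ℂ) • of fun j k : Fin K =>
        cosMomentFunctional (fun θ => σ θ * sin θ ^ 2) hσ (U ℂ j * U ℂ k) :=
    ext fun j k => fourierCoeffZ_sub_sub_fourierCoeffZ_add_two hint hsym hσ j k
  have hπ : (π : ℂ) ≠ 0 := by exact_mod_cast pi_ne_zero
  rw [hM, det_smul, det_gram_eq_prod_coeff_sq_mul_det_hankel _ (fun j => U ℂ (j : ℕ))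
    (fun j => by simp), hankelDet_eq_det_cosMomentFunctional hσ hw, Fintype.card_fin]
  simp only [coeff_U_natCast_self]
  rw [pow_add (2 : ℂ), ← Fin.prod_pow_sq_mul_pow (2 : ℂ) K, div_pow, mul_pow]
  field_simp

end Even

theorem dik_lemma_even_general (K : ℕ) (hK : 0 < K) (σ : ℝ → ℂ) (f : ℝ → ℂ)
    (hint : IntervalIntegrable σ volume (-Real.pi) Real.pi)
    (hsym : ∀ θ : ℝ, σ (-θ) = σ θ)
    (hf : ∀ θ : ℝ, f (Real.cos θ) = σ θ) :
    (1 / 2) * Matrix.det (Matrix.of fun j k : Fin K =>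
        fourierCoeffZ σ ((j : ℤ) - (k : ℤ)) + fourierCoeffZ σ ((j : ℤ) + (k : ℤ)))
      = ((2 : ℂ) ^ (K ^ 2 - K + 1) / (2 * (Real.pi : ℂ)) ^ K) *
          hankelDet K (fun x => f x / ((Real.sqrt (1 - x ^ 2) : ℝ) : ℂ))
    ∧ Matrix.det (Matrix.of fun j k : Fin K =>
        fourierCoeffZ σ ((j : ℤ) - (k : ℤ)) - fourierCoeffZ σ ((j : ℤ) + (k : ℤ) + 2))
      = ((2 : ℂ) ^ (K ^ 2 + K) / (2 * (Real.pi : ℂ)) ^ K) *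
          hankelDet K (fun x => f x * ((Real.sqrt (1 - x ^ 2) : ℝ) : ℂ)) := by
  obtain ⟨n, rfl⟩ : ∃ n, K = n + 1 := ⟨K - 1, by omega⟩
  have hsqrt : ∀ θ ∈ Set.Ioo 0 π, √(1 - cos θ ^ 2) = sin θ := fun θ hθ =>
    (sin_eq_sqrt_one_sub_cos_sq hθ.1.le hθ.2.le).symm
  refine ⟨?_, det_fourierCoeffZ_sub_eq_hankelDet hint hsym (fun θ hθ => ?_) _⟩
  · rw [Nat.sub_eq_of_eq_add (by ring : (n + 1) ^ 2 = n ^ 2 + n + (n + 1))]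
    refine det_fourierCoeffZ_add_eq_hankelDet hint hsym (fun θ hθ => ?_) n
    have hsin : (sin θ : ℂ) ≠ 0 := by exact_mod_cast (sin_pos_of_pos_of_lt_pi hθ.1 hθ.2).ne'
    rw [hsqrt θ hθ, hf]
    field_simp
  · rw [hsqrt θ hθ, hf]
    ring

/-- The two `even` identities of Lemma 2.7 of Deift–Its–Krasovsky, relating
Toeplitz±Hankel determinants (integrals over `O⁺(2K)` and `Sp(2K)`) to Hankel
determinants of moments of weights on `[-1,1]` under the substitution `x = cos θ`. -/
theorem dik_lemma_even (K : ℕ) (hK : 0 < K) (σ : ℝ → ℂ) (f : ℝ → ℂ)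
    (hper : Function.Periodic σ (2 * Real.pi))
    (hint : IntervalIntegrable σ volume (-Real.pi) Real.pi)
    (hsym : ∀ θ : ℝ, σ (-θ) = σ θ)
    (hf : ∀ θ : ℝ, f (Real.cos θ) = σ θ) :
    (1 / 2) * Matrix.det (Matrix.of fun j k : Fin K =>
        fourierCoeffZ σ ((j : ℤ) - (k : ℤ)) + fourierCoeffZ σ ((j : ℤ) + (k : ℤ)))
      = ((2 : ℂ) ^ (K ^ 2 - K + 1) / (2 * (Real.pi : ℂ)) ^ K) *
          hankelDet K (fun x => f x / ((Real.sqrt (1 - x ^ 2) : ℝ) : ℂ))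
    ∧ Matrix.det (Matrix.of fun j k : Fin K =>
        fourierCoeffZ σ ((j : ℤ) - (k : ℤ)) - fourierCoeffZ σ ((j : ℤ) + (k : ℤ) + 2))
      = ((2 : ℂ) ^ (K ^ 2 + K) / (2 * (Real.pi : ℂ)) ^ K) *
          hankelDet K (fun x => f x * ((Real.sqrt (1 - x ^ 2) : ℝ) : ℂ)) :=
  dik_lemma_even_general K hK σ f hint hsym hf
end

section
/- Let v be a real number with -1 < v < 1, set r = √((1+v)/(1-v)), and for φ ∈ ℝ let z = r e^{iφ}. Then (z + z^{-1}) - v (z - z^{-1}) = 2 √(1 - v²) cos φ. In particular, along the circle of radius r centered at the origin the complexified Gross–Witten potential (z + z^{-1}) - v(z - z^{-1}) is real-valued and equals the symmetric Gross–Witten potential rescaled by √(1-v²). -/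
/-!
The potential is the Laurent polynomial `(1 - v) z + (1 + v) z⁻¹`. On the
circle of radius `r = √((1 + v)/(1 - v))` both coefficients are balanced,
`(1 - v) r = (1 + v) r⁻¹ = √(1 - v²)`, so the potential is `√(1 - v²) (e^{iφ} + e^{-iφ})`.
-/

open Complex

theorem Real.mul_sqrt_div {b : ℝ} (a : ℝ) (hb : 0 ≤ b) : b * √(a / b) = √(a * b) :=
  calc b * √(a / b) = √a * (b / √b) := by rw [Real.sqrt_div' a hb]; ring
    _ = √(a * b) := by rw [Real.div_sqrt, Real.sqrt_mul' a hb]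

theorem Complex.mul_add_mul_inv_eq_two_mul_cos {a b : ℝ} (ha : 0 ≤ a) (hb : 0 ≤ b) (φ : ℝ) :
    (a : ℂ) * ((√(b / a) : ℝ) * exp (I * φ)) + (b : ℂ) * ((√(b / a) : ℝ) * exp (I * φ))⁻¹
      = ((2 * √(a * b) * Real.cos φ : ℝ) : ℂ) := by
  set r := √(b / a)
  have har : a * r = √(a * b) := by rw [Real.mul_sqrt_div b ha, mul_comm]
  have hbr : b * r⁻¹ = √(a * b) := by rw [← Real.sqrt_inv, inv_div, Real.mul_sqrt_div a hb]
  have hcos : exp (I * φ) + exp (-(I * φ)) = 2 * cos φ := by rw [two_cos, mul_comm, neg_mul]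
  rw [mul_inv, ← exp_neg]
  push_cast
  linear_combination exp (I * φ) * (by exact_mod_cast har : (a : ℂ) * r = √(a * b))
    + exp (-(I * φ)) * (by exact_mod_cast hbr : (b : ℂ) * (r : ℂ)⁻¹ = √(a * b))
    + (√(a * b) : ℂ) * hcos

/-- Along the circle of radius `√((1+v)/(1-v))`, the complexified Gross–Witten potential
`(z + z⁻¹) - v(z - z⁻¹)` is real-valued and equals `2√(1-v²) cos φ`. -/
theorem gross_witten_deformed_contour (v : ℝ) (hv1 : -1 < v) (hv2 : v < 1) (φ : ℝ) :
    (((Real.sqrt ((1 + v) / (1 - v)) : ℝ) : ℂ) * Complex.exp (Complex.I * (φ : ℂ))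
          + (((Real.sqrt ((1 + v) / (1 - v)) : ℝ) : ℂ) * Complex.exp (Complex.I * (φ : ℂ)))⁻¹)
        - (v : ℂ) *
          (((Real.sqrt ((1 + v) / (1 - v)) : ℝ) : ℂ) * Complex.exp (Complex.I * (φ : ℂ))
            - (((Real.sqrt ((1 + v) / (1 - v)) : ℝ) : ℂ) * Complex.exp (Complex.I * (φ : ℂ)))⁻¹)
      = ((2 * Real.sqrt (1 - v ^ 2) * Real.cos φ : ℝ) : ℂ) := by
  set z := ((√((1 + v) / (1 - v)) : ℝ) : ℂ) * exp (I * φ)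
  have hz : ((1 - v : ℝ) : ℂ) * z + ((1 + v : ℝ) : ℂ) * z⁻¹
      = ((2 * √((1 - v) * (1 + v)) * Real.cos φ : ℝ) : ℂ) :=
    mul_add_mul_inv_eq_two_mul_cos (by linarith) (by linarith) φ
  rw [show (1 - v) * (1 + v) = 1 - v ^ 2 by ring] at hz
  rw [← hz]
  push_cast
  ring
end

section
/- Let 0 < t < 1 and γ > 0, and define ρ_H(φ) = (1/2π) · [ 1 + 2γt (cos φ - t) / (1 + t² - 2t cos φ) ] for φ ∈ [-π, π]. Then ρ_H(φ) ≥ 0 for all φ ∈ [-π, π] if and only if γ ≤ (1+t)/(2t). -/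
/-!
Over a common denominator, `2π ρ_H(φ) = N(cos φ) / (1 + t² - 2t cos φ)`, where the denominator is
`|1 - t e^{iφ}|² > 0` and the numerator `N(c) = 1 + t² - 2tc + 2γt(c - t)` is affine in `c`.
Hence `ρ_H ≥ 0` exactly when `N(±1) ≥ 0`. Now `N(1) = (1 - t)(1 - t + 2γt)` is always positive,
while `N(-1) = (1 + t)(1 + t - 2γt)` is nonnegative iff `γ ≤ (1 + t)/(2t)`: the density first
becomes negative at `φ = ±π`.
-/

lemma one_add_sq_sub_two_mul_pos {t c : ℝ} (ht : |t| < 1) (hc : c ∈ Set.Icc (-1 : ℝ) 1) :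
    0 < 1 + t ^ 2 - 2 * t * c := by
  obtain ⟨hc₁, hc₂⟩ := hc
  obtain ⟨ht₁, ht₂⟩ := abs_lt.mp ht
  rcases le_total 0 t with h | h
  · nlinarith [mul_nonneg h (sub_nonneg.mpr hc₂)]
  · nlinarith [mul_nonneg (neg_nonneg.mpr h) (neg_le_iff_add_nonneg.mp hc₁)]

lemma one_add_div_nonneg_iff {x d : ℝ} (hd : 0 < d) : 0 ≤ 1 + x / d ↔ 0 ≤ d + x := by
  rw [one_add_div hd.ne', le_div_iff₀ hd, zero_mul]

lemma hmodel_numerator_eq (t γ c : ℝ) :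
    1 + t ^ 2 - 2 * t * c + 2 * γ * t * (c - t) =
      (1 - c) / 2 * ((1 + t) * (1 + t - 2 * γ * t)) +
        (1 + c) / 2 * ((1 - t) * (1 - t + 2 * γ * t)) := by
  ring

lemma hmodel_numerator_nonneg {t γ c : ℝ} (hc : c ∈ Set.Icc (-1 : ℝ) 1)
    (hneg : 0 ≤ (1 + t) * (1 + t - 2 * γ * t)) (hpos : 0 ≤ (1 - t) * (1 - t + 2 * γ * t)) :
    0 ≤ 1 + t ^ 2 - 2 * t * c + 2 * γ * t * (c - t) := by
  obtain ⟨hc₁, hc₂⟩ := hc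
  rw [hmodel_numerator_eq]
  exact add_nonneg (mul_nonneg (by linarith) hneg) (mul_nonneg (by linarith) hpos)

/-- The weak-coupling eigenvalue density of the symmetric H-model,
`ρ_H(φ) = (1/2π)[1 + 2γt(cos φ - t)/(1 + t² - 2t cos φ)]`, is nonnegative on `[-π, π]`
if and only if `γ ≤ (1+t)/(2t)`. -/
theorem hmodel_density_nonneg_iff (t γ : ℝ) (ht0 : 0 < t) (ht1 : t < 1) (hγ : 0 < γ) :
    (∀ φ ∈ Set.Icc (-Real.pi) Real.pi,
        0 ≤ (1 / (2 * Real.pi)) *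
          (1 + 2 * γ * t * (Real.cos φ - t) / (1 + t ^ 2 - 2 * t * Real.cos φ)))
      ↔ γ ≤ (1 + t) / (2 * t) := by
  have hcos (φ : ℝ) : Real.cos φ ∈ Set.Icc (-1 : ℝ) 1 := ⟨Real.neg_one_le_cos φ, Real.cos_le_one φ⟩
  have hdensity (φ : ℝ) :
      0 ≤ (1 / (2 * Real.pi)) *
          (1 + 2 * γ * t * (Real.cos φ - t) / (1 + t ^ 2 - 2 * t * Real.cos φ)) ↔
        0 ≤ 1 + t ^ 2 - 2 * t * Real.cos φ + 2 * γ * t * (Real.cos φ - t) := by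
    rw [mul_nonneg_iff_of_pos_left (by positivity),
      one_add_div_nonneg_iff (one_add_sq_sub_two_mul_pos (abs_lt.mpr ⟨by linarith, ht1⟩) (hcos φ))]
  have hcrit : γ ≤ (1 + t) / (2 * t) ↔ 0 ≤ (1 + t) * (1 + t - 2 * γ * t) := by
    rw [le_div_iff₀ (by positivity), mul_nonneg_iff_of_pos_left (by linarith)]
    constructor <;> intro h <;> linarith
  simp only [hdensity, hcrit]
  constructor
  · intro h
    have := h Real.pi ⟨by linarith [Real.pi_pos], le_rfl⟩
    rw [Real.cos_pi] at this
    linarith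
  · intro hneg φ _
    exact hmodel_numerator_nonneg (hcos φ) hneg
      (mul_nonneg (by linarith) (by nlinarith))
end

section
/- Let 0 < t < 1 and γ > 0, and define ρ_E(φ) = (1/2π) · [ 1 + 2γt (cos φ + t) / (1 + t² + 2t cos φ) ] for φ ∈ [-π, π]. Then ρ_E(φ) ≥ 0 for all φ ∈ [-π, π] if and only if γ ≤ (1-t)/(2t). -/
/-!
The denominator `1 + t² + 2t cos φ` is at least `(1 - t)² > 0`, so `ρ_E(φ)` has the sign of
`1 + t² + 2t cos φ + 2γt(cos φ + t) = (1 - t)(1 - t - 2γt) + 2t(1 + γ)(1 + cos φ)`.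
This is increasing in `cos φ`, so it is nonnegative everywhere iff it is at `φ = π`,
i.e. iff `1 - t - 2γt ≥ 0`.
-/

lemma sq_one_sub_le_one_add_sq_add_mul {t c : ℝ} (ht : 0 ≤ t) (hc : -1 ≤ c) :
    (1 - t) ^ 2 ≤ 1 + t ^ 2 + 2 * t * c := by
  nlinarith

lemma one_add_div_nonneg_iff_s12 {K : Type*} [Field K] [LinearOrder K] [IsStrictOrderedRing K]
    {a b : K} (hb : 0 < b) : 0 ≤ 1 + a / b ↔ 0 ≤ b + a := by
  rw [one_add_div hb.ne', le_div_iff₀ hb, zero_mul]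

lemma emodel_numerator_eq (t γ c : ℝ) :
    1 + t ^ 2 + 2 * t * c + 2 * γ * t * (c + t)
      = (1 - t) * (1 - t - 2 * γ * t) + 2 * t * (1 + γ) * (1 + c) := by
  ring

lemma emodel_density_nonneg_iff_at {t γ c : ℝ} (ht0 : 0 ≤ t) (ht1 : t < 1) (hc : -1 ≤ c) :
    0 ≤ (1 / (2 * Real.pi)) * (1 + 2 * γ * t * (c + t) / (1 + t ^ 2 + 2 * t * c))
      ↔ 0 ≤ (1 - t) * (1 - t - 2 * γ * t) + 2 * t * (1 + γ) * (1 + c) := by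
  have hD : 0 < 1 + t ^ 2 + 2 * t * c :=
    (pow_pos (sub_pos.2 ht1) 2).trans_le (sq_one_sub_le_one_add_sq_add_mul ht0 hc)
  rw [mul_nonneg_iff_of_pos_left (by positivity), one_add_div_nonneg_iff_s12 hD, emodel_numerator_eq]

/-- The weak-coupling eigenvalue density of the symmetric E-model,
`ρ_E(φ) = (1/2π)[1 + 2γt(cos φ + t)/(1 + t² + 2t cos φ)]`, is nonnegative on `[-π, π]`
if and only if `γ ≤ (1-t)/(2t)`. -/
theorem emodel_density_nonneg_iff (t γ : ℝ) (ht0 : 0 < t) (ht1 : t < 1) (hγ : 0 < γ) :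
    (∀ φ ∈ Set.Icc (-Real.pi) Real.pi,
        0 ≤ (1 / (2 * Real.pi)) *
          (1 + 2 * γ * t * (Real.cos φ + t) / (1 + t ^ 2 + 2 * t * Real.cos φ)))
      ↔ γ ≤ (1 - t) / (2 * t) := by
  rw [le_div_iff₀ (by positivity)]
  constructor
  · intro hρ
    have hπ := (emodel_density_nonneg_iff_at ht0.le ht1 (Real.neg_one_le_cos Real.pi)).1
      (hρ Real.pi ⟨by linarith [Real.pi_pos], le_rfl⟩)
    rw [Real.cos_pi, add_neg_cancel, mul_zero, add_zero] at hπ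
    linarith [nonneg_of_mul_nonneg_right hπ (sub_pos.2 ht1)]
  · intro hγt φ _
    rw [emodel_density_nonneg_iff_at ht0.le ht1 (Real.neg_one_le_cos φ)]
    have hcos : 0 ≤ 1 + Real.cos φ := by linarith [Real.neg_one_le_cos φ]
    exact add_nonneg (mul_nonneg (by linarith) (by linarith))
      (mul_nonneg (by positivity) hcos)
end

section
/- Let 0 < t < 1 and γ > (1+t)/(2t), and suppose φ₀ ∈ (0, π) satisfies sin²(φ₀/2) = (1-t)²(2γ-1) / (4t(γ-1)²). Then ( 2(γ-1)t / π ) · ∫_{-φ₀}^{φ₀} [ cos(φ/2) / ( (1-t)² + 4t sin²(φ/2) ) ] · √( sin²(φ₀/2) - sin²(φ/2) ) dφ = 1. -/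
/-!
Substituting `u = sin (φ / 2)` and writing `(1 - t)² + 4t u² = 4t (c² + u²)` with
`c = (1 - t) / (2√t)`, the mass becomes `(γ - 1) / π · ∫_{-a}^{a} √(a² - u²) / (c² + u²) du`,
where `a = sin (φ₀ / 2)`. This integral equals `π (√(a² + c²) / c - 1)`: with `q = √(a² + c²)`,
`(q / c) · arcsin (q u / (a √(c² + u²))) - arcsin (u / a)` is a primitive, odd, and equal to
`π / 2 · (q / c - 1)` at `u = a`. The endpoint equation says exactly `q / c = γ / (γ - 1)`.
-/

open Real intervalIntegral

lemma HasDerivAt.arcsin {f : ℝ → ℝ} {f' u : ℝ} (hf : HasDerivAt f f' u) (hu : f u ^ 2 < 1) :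
    HasDerivAt (fun x ↦ arcsin (f x)) (1 / √(1 - f u ^ 2) * f') u := by
  obtain ⟨h₁, h₂⟩ := abs_lt.mp ((sq_lt_one_iff_abs_lt_one _).mp hu)
  exact (hasDerivAt_arcsin h₁.ne' h₂.ne).comp u hf

lemma hasDerivAt_arcsin_div {a u : ℝ} (ha : 0 < a) (hu : u ^ 2 < a ^ 2) :
    HasDerivAt (fun x ↦ arcsin (x / a)) (1 / √(a ^ 2 - u ^ 2)) u := by
  have hsqrt : √(1 - (u / a) ^ 2) = √(a ^ 2 - u ^ 2) / a := by
    rw [← sqrt_sq ha.le, ← sqrt_div' _ (sq_nonneg a), sqrt_sq ha.le]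
    congr 1
    field_simp
  refine ((hasDerivAt_id' u).div_const a |>.arcsin ?_).congr_deriv ?_
  · rwa [div_pow, div_lt_one (by positivity)]
  · rw [hsqrt]
    field_simp

lemma hasDerivAt_arcsin_mul_div_sqrt_sq_add {a c q u : ℝ} (ha : 0 < a) (hc : 0 < c)
    (hq : q ^ 2 = a ^ 2 + c ^ 2) (hu : u ^ 2 < a ^ 2) :
    HasDerivAt (fun x ↦ arcsin (q * x / (a * √(c ^ 2 + x ^ 2))))
      (q * c / ((c ^ 2 + u ^ 2) * √(a ^ 2 - u ^ 2))) u := by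
  have hS₁_pos : 0 < c ^ 2 + u ^ 2 := by positivity
  have hS₂_pos : 0 < a ^ 2 - u ^ 2 := by linarith
  set S₁ := √(c ^ 2 + u ^ 2) with hS₁
  set S₂ := √(a ^ 2 - u ^ 2)
  have hS₁sq : S₁ ^ 2 = c ^ 2 + u ^ 2 := sq_sqrt hS₁_pos.le
  have hS₂sq : S₂ ^ 2 = a ^ 2 - u ^ 2 := sq_sqrt hS₂_pos.le
  have hS₁0 : 0 < S₁ := sqrt_pos.mpr hS₁_pos
  have hS₂0 : 0 < S₂ := sqrt_pos.mpr hS₂_pos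
  have hcos : 1 - (q * u / (a * S₁)) ^ 2 = (c * S₂ / (a * S₁)) ^ 2 := by
    field_simp
    linear_combination a ^ 2 * hS₁sq - u ^ 2 * hq - c ^ 2 * hS₂sq
  have hden : HasDerivAt (fun x ↦ a * √(c ^ 2 + x ^ 2)) (a * (2 * u / (2 * S₁))) u := by
    simpa using (((hasDerivAt_pow 2 u).const_add (c ^ 2)).sqrt hS₁_pos.ne').const_mul a
  refine (HasDerivAt.arcsin (f := fun x ↦ q * x / (a * √(c ^ 2 + x ^ 2)))
    (((hasDerivAt_id' u).const_mul q).div hden (by positivity)) ?_).congr_deriv ?_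
  · have : 0 < (c * S₂ / (a * S₁)) ^ 2 := by positivity
    linarith
  · rw [← hS₁, hcos, sqrt_sq (by positivity)]
    field_simp
    linear_combination q * u ^ 2 * hS₁sq

lemma hasDerivAt_primitive_sqrt_sq_sub_sq_div_sq_add_sq {a c q u : ℝ} (ha : 0 < a) (hc : 0 < c)
    (hq : q ^ 2 = a ^ 2 + c ^ 2) (hu : u ^ 2 < a ^ 2) :
    HasDerivAt (fun x ↦ q / c * arcsin (q * x / (a * √(c ^ 2 + x ^ 2))) - arcsin (x / a))
      (√(a ^ 2 - u ^ 2) / (c ^ 2 + u ^ 2)) u := by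
  refine (((hasDerivAt_arcsin_mul_div_sqrt_sq_add ha hc hq hu).const_mul (q / c)).sub
    (hasDerivAt_arcsin_div ha hu)).congr_deriv ?_
  have hS : 0 < √(a ^ 2 - u ^ 2) := sqrt_pos.mpr (by linarith)
  have hS2 : √(a ^ 2 - u ^ 2) ^ 2 = a ^ 2 - u ^ 2 := sq_sqrt (by linarith)
  field_simp
  linear_combination hq - hS2

lemma continuous_sqrt_sq_sub_sq_div_sq_add_sq (a : ℝ) {c : ℝ} (hc : c ≠ 0) :
    Continuous fun u ↦ √(a ^ 2 - u ^ 2) / (c ^ 2 + u ^ 2) :=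
  .div (by fun_prop) (by fun_prop) fun u ↦ by positivity

lemma integral_sqrt_sq_sub_sq_div_sq_add_sq {a c : ℝ} (ha : 0 < a) (hc : 0 < c) :
    ∫ u in -a..a, √(a ^ 2 - u ^ 2) / (c ^ 2 + u ^ 2) = π * (√(a ^ 2 + c ^ 2) / c - 1) := by
  set q := √(a ^ 2 + c ^ 2)
  have hq : q ^ 2 = a ^ 2 + c ^ 2 := sq_sqrt (by positivity)
  have hq0 : 0 < q := by positivity
  set F : ℝ → ℝ := fun x ↦ q / c * arcsin (q * x / (a * √(c ^ 2 + x ^ 2))) - arcsin (x / a)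
  have hF_neg (x : ℝ) : F (-x) = -F x := by
    simp only [F, neg_sq, mul_neg, neg_div, arcsin_neg]
    ring
  have hF_right : F a = π / 2 * (q / c - 1) := by
    have hqa : q * a / (a * √(c ^ 2 + a ^ 2)) = 1 := by
      rw [add_comm, ← hq, sqrt_sq hq0.le]
      field_simp
    simp only [F, hqa, div_self ha.ne', arcsin_one]
    ring
  have hF_cont : Continuous F := by
    refine .sub (continuous_const.mul (continuous_arcsin.comp (.div (by fun_prop) (by fun_prop)
      fun x ↦ ?_))) (continuous_arcsin.comp (by fun_prop))
    have : 0 < √(c ^ 2 + x ^ 2) := sqrt_pos.mpr (by positivity)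
    positivity
  have hF_deriv (x : ℝ) (hx : x ∈ Set.Ioo (-a) a) :
      HasDerivAt F (√(a ^ 2 - x ^ 2) / (c ^ 2 + x ^ 2)) x :=
    hasDerivAt_primitive_sqrt_sq_sub_sq_div_sq_add_sq ha hc hq (by nlinarith [hx.1, hx.2])
  rw [integral_eq_sub_of_hasDerivAt_of_le (by linarith) hF_cont.continuousOn hF_deriv
    ((continuous_sqrt_sq_sub_sq_div_sq_add_sq a hc.ne').intervalIntegrable _ _), hF_neg, hF_right]
  ring

lemma integral_comp_sin_half_mul_cos_half {f : ℝ → ℝ} (hf : Continuous f) (α β : ℝ) :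
    ∫ φ in α..β, f (sin (φ / 2)) * cos (φ / 2) = 2 * ∫ u in sin (α / 2)..sin (β / 2), f u := by
  have hsin (φ : ℝ) : HasDerivAt (fun x ↦ sin (x / 2)) (cos (φ / 2) / 2) φ :=
    ((hasDerivAt_id' φ).div_const 2).sin.congr_deriv (by ring)
  rw [← integral_comp_mul_deriv (fun φ _ ↦ hsin φ) (by fun_prop) hf, ← integral_const_mul]
  congr 1 with φ
  simp only [Function.comp]
  ring

/-- Normalization of the strong-coupling (gapped) eigenvalue density of the symmetric
H-model: with the endpoint `φ₀` determined by
`sin²(φ₀/2) = (1-t)²(2γ-1)/(4t(γ-1)²)`, the density has total mass one. -/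
theorem hmodel_strong_coupling_density_normalized (t γ φ₀ : ℝ)
    (ht0 : 0 < t) (ht1 : t < 1) (hγ : (1 + t) / (2 * t) < γ)
    (hφ : φ₀ ∈ Set.Ioo 0 Real.pi)
    (hφ0 : Real.sin (φ₀ / 2) ^ 2 = (1 - t) ^ 2 * (2 * γ - 1) / (4 * t * (γ - 1) ^ 2)) :
    (2 * (γ - 1) * t / Real.pi) *
        ∫ φ in (-φ₀)..φ₀,
          (Real.cos (φ / 2) / ((1 - t) ^ 2 + 4 * t * Real.sin (φ / 2) ^ 2)) *
            Real.sqrt (Real.sin (φ₀ / 2) ^ 2 - Real.sin (φ / 2) ^ 2)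
      = 1 := by
  have hγ1 : 0 < γ - 1 := by
    have : 1 ≤ (1 + t) / (2 * t) := by rw [le_div_iff₀ (by linarith)]; linarith
    linarith
  set a := sin (φ₀ / 2)
  have ha : 0 < a := sin_pos_of_pos_of_lt_pi (by linarith [hφ.1]) (by linarith [hφ.2, pi_pos])
  set c := (1 - t) / (2 * √t)
  have hc : 0 < c := div_pos (by linarith) (by positivity)
  have hc2 : c ^ 2 = (1 - t) ^ 2 / (4 * t) := by
    rw [div_pow, mul_pow, sq_sqrt ht0.le]
    ring
  have hq : √(a ^ 2 + c ^ 2) / c = γ / (γ - 1) := by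
    have : a ^ 2 + c ^ 2 = (c * γ / (γ - 1)) ^ 2 := by
      rw [hφ0, hc2, div_pow, mul_pow, hc2]
      field_simp
      ring
    rw [this, sqrt_sq (div_nonneg (mul_nonneg hc.le (by linarith)) hγ1.le)]
    field_simp
  have hdensity (φ : ℝ) : cos (φ / 2) / ((1 - t) ^ 2 + 4 * t * sin (φ / 2) ^ 2) *
      √(a ^ 2 - sin (φ / 2) ^ 2) =
      1 / (4 * t) * (√(a ^ 2 - sin (φ / 2) ^ 2) / (c ^ 2 + sin (φ / 2) ^ 2) * cos (φ / 2)) := by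
    rw [hc2]
    field_simp
  simp only [hdensity, integral_const_mul]
  rw [integral_comp_sin_half_mul_cos_half (continuous_sqrt_sq_sub_sq_div_sq_add_sq a hc.ne'),
    neg_div, sin_neg, integral_sqrt_sq_sub_sq_div_sq_add_sq ha hc, hq]
  field_simp
  ring
end

section
/- Fix γ > 0, and for 0 < t < 1 define F_w(t) = -γ² log(1 - t²) and F_s(t) = -(2γ - 1) log(1 - t) - (1/2) log t. Then at every point t ∈ (0,1) with γ = (1+t)/(2t) one has F_w'(t) = F_s'(t) and F_w''(t) = F_s''(t), while F_w'''(t) - F_s'''(t) = 1 / ( t³ (1 - t²) ). -/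
/-!
On the critical curve `2γt = 1 + t` all three derivatives of both free energies are explicit
rational functions of `t` and `γ`; eliminating `γ` makes the first two differences vanish
identically and leaves `1 / (t³ (1 - t²))` for the third.
-/

open Set Real

theorem Set.EqOn.iteratedDeriv_succ {f g g' : ℝ → ℝ} {U : Set ℝ} {n : ℕ} (hU : IsOpen U)
    (hn : EqOn (iteratedDeriv n f) g U) (hg : ∀ x ∈ U, HasDerivAt g (g' x) x) :
    EqOn (iteratedDeriv (n + 1) f) g' U := fun x hx => by
  rw [_root_.iteratedDeriv_succ, (hn.eventuallyEq_of_mem (hU.mem_nhds hx)).deriv_eq]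
  exact (hg x hx).deriv

theorem Set.eqOn_iteratedDeriv_one_of_hasDerivAt {f f' : ℝ → ℝ} {U : Set ℝ}
    (hf : ∀ x ∈ U, HasDerivAt f (f' x) x) : EqOn (iteratedDeriv 1 f) f' U := fun x hx => by
  rw [iteratedDeriv_one]
  exact (hf x hx).deriv

lemma one_sub_sq_ne_zero {s : ℝ} (hs : s ∈ Ioo (-1 : ℝ) 1) : 1 - s ^ 2 ≠ 0 := by
  have : s ^ 2 < 1 := by nlinarith [hs.1, hs.2]
  linarith

lemma hasDerivAt_one_sub_sq (s : ℝ) : HasDerivAt (fun s : ℝ => 1 - s ^ 2) (-(2 * s)) s := by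
  simpa using (hasDerivAt_pow 2 s).const_sub 1

section WeakCoupling

variable (γ : ℝ)

lemma eqOn_weak_iteratedDeriv_one :
    EqOn (iteratedDeriv 1 fun s : ℝ => -γ ^ 2 * log (1 - s ^ 2))
      (fun s => 2 * γ ^ 2 * s / (1 - s ^ 2)) (Ioo (-1) 1) := by
  refine eqOn_iteratedDeriv_one_of_hasDerivAt fun s hs => ?_
  have hs' := one_sub_sq_ne_zero hs
  refine (((hasDerivAt_one_sub_sq s).log hs').const_mul (-γ ^ 2)).congr_deriv ?_
  field_simp

lemma eqOn_weak_iteratedDeriv_two :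
    EqOn (iteratedDeriv 2 fun s : ℝ => -γ ^ 2 * log (1 - s ^ 2))
      (fun s => 2 * γ ^ 2 * (1 + s ^ 2) / (1 - s ^ 2) ^ 2) (Ioo (-1) 1) := by
  refine (eqOn_weak_iteratedDeriv_one γ).iteratedDeriv_succ isOpen_Ioo fun s hs => ?_
  have hs' := one_sub_sq_ne_zero hs
  refine (((hasDerivAt_id' s).const_mul (2 * γ ^ 2)).fun_div (hasDerivAt_one_sub_sq s)
    hs').congr_deriv ?_
  field_simp
  ring

lemma eqOn_weak_iteratedDeriv_three :
    EqOn (iteratedDeriv 3 fun s : ℝ => -γ ^ 2 * log (1 - s ^ 2))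
      (fun s => 4 * γ ^ 2 * s * (3 + s ^ 2) / (1 - s ^ 2) ^ 3) (Ioo (-1) 1) := by
  refine (eqOn_weak_iteratedDeriv_two γ).iteratedDeriv_succ isOpen_Ioo fun s hs => ?_
  have hs' := one_sub_sq_ne_zero hs
  refine ((((hasDerivAt_pow 2 s).const_add 1).const_mul (2 * γ ^ 2)).fun_div
    ((hasDerivAt_one_sub_sq s).fun_pow 2) (pow_ne_zero 2 hs')).congr_deriv ?_
  field_simp
  ring

end WeakCoupling

section StrongCoupling

variable (γ : ℝ)

lemma eqOn_strong_iteratedDeriv_one :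
    EqOn (iteratedDeriv 1 fun s : ℝ => -(2 * γ - 1) * log (1 - s) - (1 / 2) * log s)
      (fun s => (2 * γ - 1) / (1 - s) - 1 / (2 * s)) (Ioo 0 1) := by
  refine eqOn_iteratedDeriv_one_of_hasDerivAt fun s hs => ?_
  have h0 : s ≠ 0 := hs.1.ne'
  have h1 : 1 - s ≠ 0 := (sub_pos.2 hs.2).ne'
  refine (((((hasDerivAt_id' s).const_sub 1).log h1).const_mul (-(2 * γ - 1))).sub
    ((hasDerivAt_log h0).const_mul (1 / 2))).congr_deriv ?_
  field_simp

lemma eqOn_strong_iteratedDeriv_two :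
    EqOn (iteratedDeriv 2 fun s : ℝ => -(2 * γ - 1) * log (1 - s) - (1 / 2) * log s)
      (fun s => (2 * γ - 1) / (1 - s) ^ 2 + 1 / (2 * s ^ 2)) (Ioo 0 1) := by
  refine (eqOn_strong_iteratedDeriv_one γ).iteratedDeriv_succ isOpen_Ioo fun s hs => ?_
  have h0 : s ≠ 0 := hs.1.ne'
  have h1 : 1 - s ≠ 0 := (sub_pos.2 hs.2).ne'
  refine (((hasDerivAt_const s (2 * γ - 1)).fun_div ((hasDerivAt_id' s).const_sub 1) h1).sub
    ((hasDerivAt_const s 1).fun_div ((hasDerivAt_id' s).const_mul 2)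
      (mul_ne_zero two_ne_zero h0))).congr_deriv ?_
  field_simp
  ring

lemma eqOn_strong_iteratedDeriv_three :
    EqOn (iteratedDeriv 3 fun s : ℝ => -(2 * γ - 1) * log (1 - s) - (1 / 2) * log s)
      (fun s => 2 * (2 * γ - 1) / (1 - s) ^ 3 - 1 / s ^ 3) (Ioo 0 1) := by
  refine (eqOn_strong_iteratedDeriv_two γ).iteratedDeriv_succ isOpen_Ioo fun s hs => ?_
  have h0 : s ≠ 0 := hs.1.ne'
  have h1 : 1 - s ≠ 0 := (sub_pos.2 hs.2).ne'
  refine (((hasDerivAt_const s (2 * γ - 1)).fun_div (((hasDerivAt_id' s).const_sub 1).fun_pow 2)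
    (pow_ne_zero 2 h1)).add ((hasDerivAt_const s 1).fun_div ((hasDerivAt_pow 2 s).const_mul 2)
    (mul_ne_zero two_ne_zero (pow_ne_zero 2 h0)))).congr_deriv ?_
  field_simp
  ring

end StrongCoupling

theorem hmodel_third_order_transition_general (γ : ℝ) (t : ℝ)
    (ht : t ∈ Set.Ioo (0 : ℝ) 1) (hc : γ = (1 + t) / (2 * t)) :
    deriv (fun s : ℝ => -γ ^ 2 * Real.log (1 - s ^ 2)) t
        = deriv (fun s : ℝ => -(2 * γ - 1) * Real.log (1 - s) - (1 / 2) * Real.log s) t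
    ∧ iteratedDeriv 2 (fun s : ℝ => -γ ^ 2 * Real.log (1 - s ^ 2)) t
        = iteratedDeriv 2
            (fun s : ℝ => -(2 * γ - 1) * Real.log (1 - s) - (1 / 2) * Real.log s) t
    ∧ iteratedDeriv 3 (fun s : ℝ => -γ ^ 2 * Real.log (1 - s ^ 2)) t
        - iteratedDeriv 3
            (fun s : ℝ => -(2 * γ - 1) * Real.log (1 - s) - (1 / 2) * Real.log s) t
      = 1 / (t ^ 3 * (1 - t ^ 2)) := by
  have ht' : t ∈ Ioo (-1 : ℝ) 1 := ⟨by linarith [ht.1], ht.2⟩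
  have h0 : t ≠ 0 := ht.1.ne'
  have h1 : 1 - t ≠ 0 := (sub_pos.2 ht.2).ne'
  have h2 : 1 - t ^ 2 ≠ 0 := one_sub_sq_ne_zero ht'
  rw [← iteratedDeriv_one, ← iteratedDeriv_one, eqOn_weak_iteratedDeriv_one γ ht',
    eqOn_strong_iteratedDeriv_one γ ht, eqOn_weak_iteratedDeriv_two γ ht',
    eqOn_strong_iteratedDeriv_two γ ht, eqOn_weak_iteratedDeriv_three γ ht',
    eqOn_strong_iteratedDeriv_three γ ht, hc]
  refine ⟨?_, ?_, ?_⟩ <;> · beta_reduce; field_simp; ring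

/-- Third-order phase transition of the symmetric H-model: across the critical curve
`γ = (1+t)/(2t)` the weak- and strong-coupling free energies agree to second order in `t`,
while the third `t`-derivatives jump by `1/(t³(1-t²))`. -/
theorem hmodel_third_order_transition (γ : ℝ) (hγ : 0 < γ) (t : ℝ)
    (ht : t ∈ Set.Ioo (0 : ℝ) 1) (hc : γ = (1 + t) / (2 * t)) :
    deriv (fun s : ℝ => -γ ^ 2 * Real.log (1 - s ^ 2)) t
        = deriv (fun s : ℝ => -(2 * γ - 1) * Real.log (1 - s) - (1 / 2) * Real.log s) t
    ∧ iteratedDeriv 2 (fun s : ℝ => -γ ^ 2 * Real.log (1 - s ^ 2)) t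
        = iteratedDeriv 2
            (fun s : ℝ => -(2 * γ - 1) * Real.log (1 - s) - (1 / 2) * Real.log s) t
    ∧ iteratedDeriv 3 (fun s : ℝ => -γ ^ 2 * Real.log (1 - s ^ 2)) t
        - iteratedDeriv 3
            (fun s : ℝ => -(2 * γ - 1) * Real.log (1 - s) - (1 / 2) * Real.log s) t
      = 1 / (t ^ 3 * (1 - t ^ 2)) :=
  hmodel_third_order_transition_general γ t ht hc
end

section
/- Fix γ > 0 and a real number v with -1 < v < 1, and for 0 < t < 1 define ΔF_w(t) = γ² log(1 - t²) and ΔF_s(t) = log(1 - t) - (1/2) log t. Then at every point t ∈ (0,1) with γ = (1+t)/(2t) one has ΔF_w'(t) = ΔF_s'(t), while v² ( ΔF_w''(t) - ΔF_s''(t) ) = -v² / ( t² (1 - t) ). -/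
/-! Both corrections are elementary, so their first two derivatives are explicit rational
functions of `t`. On the critical curve `γ = (1+t)/(2t)` the weak-coupling slope `-2γ²t/(1-t²)`
collapses to `-(1+t)/(2t(1-t)) = -1/(1-t) - 1/(2t)`, the strong-coupling slope, and the remaining
comparison of second derivatives is rational-function algebra. -/

open Filter Topology Real

theorem iteratedDeriv_two_eq_of_hasDerivAt {𝕜 F : Type*} [NontriviallyNormedField 𝕜]
    [NormedAddCommGroup F] [NormedSpace 𝕜 F] {f f' : 𝕜 → F} {f'' : F} {x : 𝕜}
    (hf : ∀ᶠ y in 𝓝 x, HasDerivAt f (f' y) y) (hf' : HasDerivAt f' f'' x) :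
    iteratedDeriv 2 f x = f'' := by
  rw [iteratedDeriv_succ, iteratedDeriv_one]
  exact (hf'.congr_of_eventuallyEq (hf.mono fun y hy => hy.deriv)).deriv

section WeakCoupling

variable (c : ℝ) {s : ℝ}

theorem hasDerivAt_const_mul_log_one_sub_sq (hs : 1 - s ^ 2 ≠ 0) :
    HasDerivAt (fun s => c * log (1 - s ^ 2)) (-2 * c * s / (1 - s ^ 2)) s := by
  have h := (((hasDerivAt_pow 2 s).const_sub 1).log hs).const_mul c
  refine h.congr_deriv ?_
  field_simp
  ring

theorem hasDerivAt_const_mul_div_one_sub_sq (hs : 1 - s ^ 2 ≠ 0) :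
    HasDerivAt (fun s => -2 * c * s / (1 - s ^ 2))
      (-2 * c * (1 + s ^ 2) / (1 - s ^ 2) ^ 2) s := by
  have h := ((hasDerivAt_id' (x := s)).const_mul (-2 * c)).div
    ((hasDerivAt_pow 2 s).const_sub 1) hs
  refine h.congr_deriv ?_
  field_simp
  ring

theorem deriv_const_mul_log_one_sub_sq (hs : 1 - s ^ 2 ≠ 0) :
    deriv (fun s => c * log (1 - s ^ 2)) s = -2 * c * s / (1 - s ^ 2) :=
  (hasDerivAt_const_mul_log_one_sub_sq c hs).deriv

theorem iteratedDeriv_two_const_mul_log_one_sub_sq (hs : 1 - s ^ 2 ≠ 0) :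
    iteratedDeriv 2 (fun s => c * log (1 - s ^ 2)) s
      = -2 * c * (1 + s ^ 2) / (1 - s ^ 2) ^ 2 := by
  have hnear : ∀ᶠ y in 𝓝 s, 1 - y ^ 2 ≠ 0 :=
    (by fun_prop : Continuous fun y : ℝ => 1 - y ^ 2).continuousAt.eventually_ne hs
  exact iteratedDeriv_two_eq_of_hasDerivAt
    (hnear.mono fun y hy => hasDerivAt_const_mul_log_one_sub_sq c hy)
    (hasDerivAt_const_mul_div_one_sub_sq c hs)

end WeakCoupling

section StrongCoupling

variable {s : ℝ}

theorem hasDerivAt_log_one_sub_sub_half_log (hs₀ : s ≠ 0) (hs₁ : s ≠ 1) :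
    HasDerivAt (fun s => log (1 - s) - 1 / 2 * log s) (-1 / (1 - s) - 1 / (2 * s)) s := by
  have h := (((hasDerivAt_id' (x := s)).const_sub 1).log (sub_ne_zero.2 hs₁.symm)).sub
    ((hasDerivAt_log hs₀).const_mul (1 / 2))
  refine h.congr_deriv ?_
  field_simp

theorem hasDerivAt_neg_one_div_one_sub_sub_one_div_two_mul (hs₀ : s ≠ 0) (hs₁ : s ≠ 1) :
    HasDerivAt (fun s => -1 / (1 - s) - 1 / (2 * s))
      (-1 / (1 - s) ^ 2 + 1 / (2 * s ^ 2)) s := by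
  have h1s : 1 - s ≠ 0 := sub_ne_zero.2 hs₁.symm
  have h := ((hasDerivAt_const s (-1 : ℝ)).div ((hasDerivAt_id' (x := s)).const_sub 1) h1s).sub
    ((hasDerivAt_const s (1 : ℝ)).div ((hasDerivAt_id' (x := s)).const_mul 2)
      (mul_ne_zero two_ne_zero hs₀))
  refine h.congr_deriv ?_
  field_simp
  ring

theorem deriv_log_one_sub_sub_half_log (hs₀ : s ≠ 0) (hs₁ : s ≠ 1) :
    deriv (fun s => log (1 - s) - 1 / 2 * log s) s = -1 / (1 - s) - 1 / (2 * s) :=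
  (hasDerivAt_log_one_sub_sub_half_log hs₀ hs₁).deriv

theorem iteratedDeriv_two_log_one_sub_sub_half_log (hs₀ : s ≠ 0) (hs₁ : s ≠ 1) :
    iteratedDeriv 2 (fun s => log (1 - s) - 1 / 2 * log s) s
      = -1 / (1 - s) ^ 2 + 1 / (2 * s ^ 2) :=
  iteratedDeriv_two_eq_of_hasDerivAt
    ((eventually_ne_nhds hs₀).and (eventually_ne_nhds hs₁) |>.mono fun _ hy =>
      hasDerivAt_log_one_sub_sub_half_log hy.1 hy.2)
    (hasDerivAt_neg_one_div_one_sub_sub_one_div_two_mul hs₀ hs₁)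

end StrongCoupling

theorem hmodel_general_second_order_transition_general (γ v : ℝ) (t : ℝ)
    (ht : t ∈ Set.Ioo (0 : ℝ) 1) (hc : γ = (1 + t) / (2 * t)) :
    deriv (fun s : ℝ => γ ^ 2 * Real.log (1 - s ^ 2)) t
        = deriv (fun s : ℝ => Real.log (1 - s) - (1 / 2) * Real.log s) t
    ∧ v ^ 2 * (iteratedDeriv 2 (fun s : ℝ => γ ^ 2 * Real.log (1 - s ^ 2)) t
          - iteratedDeriv 2 (fun s : ℝ => Real.log (1 - s) - (1 / 2) * Real.log s) t)
      = -v ^ 2 / (t ^ 2 * (1 - t)) := by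
  obtain ⟨ht₀, ht₁⟩ := ht
  have h1t : 1 - t ≠ 0 := by linarith
  have h1t2 : 1 - t ^ 2 ≠ 0 := by nlinarith
  rw [deriv_const_mul_log_one_sub_sq _ h1t2, iteratedDeriv_two_const_mul_log_one_sub_sq _ h1t2,
    deriv_log_one_sub_sub_half_log ht₀.ne' ht₁.ne,
    iteratedDeriv_two_log_one_sub_sub_half_log ht₀.ne' ht₁.ne, hc]
  constructor <;> field_simp <;> ring

/-- Second-order phase transition of the non-symmetric H-model: across the critical curve
`γ = (1+t)/(2t)` the weak- and strong-coupling corrections `ΔF` to the free energy agree to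
first order in `t`, while (weighted by `v²`) the second `t`-derivatives jump by
`-v²/(t²(1-t))`. -/
theorem hmodel_general_second_order_transition (γ v : ℝ) (hγ : 0 < γ)
    (hv1 : -1 < v) (hv2 : v < 1) (t : ℝ)
    (ht : t ∈ Set.Ioo (0 : ℝ) 1) (hc : γ = (1 + t) / (2 * t)) :
    deriv (fun s : ℝ => γ ^ 2 * Real.log (1 - s ^ 2)) t
        = deriv (fun s : ℝ => Real.log (1 - s) - (1 / 2) * Real.log s) t
    ∧ v ^ 2 * (iteratedDeriv 2 (fun s : ℝ => γ ^ 2 * Real.log (1 - s ^ 2)) t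
          - iteratedDeriv 2 (fun s : ℝ => Real.log (1 - s) - (1 / 2) * Real.log s) t)
      = -v ^ 2 / (t ^ 2 * (1 - t)) :=
  hmodel_general_second_order_transition_general γ v t ht hc
end
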